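/- arXiv:2209.08918 — 3 statements merged into one kernel-verified Lean document; each statement's English description precedes it below -/
import Mathlib

section
/- Let $P$ be a smooth manifold, $\omega$ a closed $m$-form on $P$ whose kernel distribution $\ker\omega$ has constant rank, and $\Theta$ an $m$-form on $P$. Define the Reeb distribution $\mathcal{D}^{\mathfrak{R}}$ whose sections are $\mathfrak{R} = \{ R \in \Gamma(\ker\omega) \mid i(Y)\, i(R)\, \mathrm{d}\Theta = 0 \text{ for all } Y \in \Gamma(\ker\omega) \}$. Then $\mathfrak{R}$ is involutive: if $R_1, R_2 \in \mathfrak{R}$, then $[R_1, R_2] \in \mathfrak{R}$. -/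
open scoped BigOperators

noncomputable section

/-- Vector fields on `P` in a trivialized model with tangent model space `E`. -/
abbrev VF (P E : Type) := P → E

/-- Differential `k`-forms on `P` in the trivialized model: a pointwise alternating `k`-form. -/
abbrev Form (P E : Type) [AddCommGroup E] [Module ℝ E] (k : ℕ) :=
  P → AlternatingMap ℝ E ℝ (Fin k)

variable {P E : Type} [AddCommGroup E] [Module ℝ E]

/-- Interior product (contraction) of a vector field with a `(k+1)`-form. -/
def iotaF {k : ℕ} (X : VF P E) (α : Form P E (k + 1)) : Form P E k :=
  fun p => (α p).curryLeft (X p)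

/-- Multiplication of a form by a function. -/
def fsmul {k : ℕ} (g : P → ℝ) (β : Form P E k) : Form P E k := fun p => g p • β p

/-- A function regarded as a `0`-form. -/
def toF0 (g : P → ℝ) : Form P E 0 := fun p => AlternatingMap.constOfIsEmpty ℝ E (Fin 0) (g p)

/-- The pointwise wedge product of alternating forms. -/
def altWedge {j k : ℕ} (f : AlternatingMap ℝ E ℝ (Fin j))
    (g : AlternatingMap ℝ E ℝ (Fin k)) : AlternatingMap ℝ E ℝ (Fin (j + k)) :=
  (LinearMap.mul' ℝ ℝ).compAlternatingMap ((f.domCoprod g).domDomCongr finSumFinEquiv)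

/-- Pointwise wedge of a `1`-form with a `k`-form. -/
def w1p {k : ℕ} (σ : AlternatingMap ℝ E ℝ (Fin 1))
    (β : AlternatingMap ℝ E ℝ (Fin k)) : AlternatingMap ℝ E ℝ (Fin (k + 1)) :=
  (altWedge σ β).domDomCongr (finCongr (Nat.add_comm 1 k))

/-- Pointwise wedge of a `2`-form with a `k`-form. -/
def w2p {k : ℕ} (γ : AlternatingMap ℝ E ℝ (Fin 2))
    (β : AlternatingMap ℝ E ℝ (Fin k)) : AlternatingMap ℝ E ℝ (Fin (k + 2)) :=
  (altWedge γ β).domDomCongr (finCongr (Nat.add_comm 2 k))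

/-- Wedge of a `1`-form with a `k`-form, at the level of forms on `P`. -/
def w1F {k : ℕ} (σ : Form P E 1) (β : Form P E k) : Form P E (k + 1) :=
  fun p => w1p (σ p) (β p)

/-- Wedge of a `2`-form with a `k`-form, at the level of forms on `P`. -/
def w2F {k : ℕ} (γ : Form P E 2) (β : Form P E k) : Form P E (k + 2) :=
  fun p => w2p (γ p) (β p)

/-- An abstract differential calculus on the trivialized model `P × E`:
an exterior derivative, a Lie bracket of vector fields and a Lie derivative,
satisfying the usual Cartan calculus identities. -/
structure DiffCalc (P E : Type) [AddCommGroup E] [Module ℝ E] where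
  d : ∀ {k : ℕ}, Form P E k → Form P E (k + 1)
  bracket : VF P E → VF P E → VF P E
  lieD : VF P E → ∀ {k : ℕ}, Form P E k → Form P E k
  d_add : ∀ {k : ℕ} (α β : Form P E k), d (α + β) = d α + d β
  d_smul : ∀ {k : ℕ} (c : ℝ) (α : Form P E k), d (c • α) = c • d α
  d_d : ∀ {k : ℕ} (α : Form P E k), d (d α) = 0
  cartan : ∀ (X : VF P E) {k : ℕ} (α : Form P E (k + 1)),
    lieD X α = iotaF X (d α) + d (iotaF X α)
  lie_iota : ∀ (X Y : VF P E) {k : ℕ} (α : Form P E (k + 1)),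
    lieD X (iotaF Y α) = iotaF (bracket X Y) α + iotaF Y (lieD X α)
  lieD_add : ∀ (X : VF P E) {k : ℕ} (α β : Form P E k),
    lieD X (α + β) = lieD X α + lieD X β
  leibniz_fun : ∀ (g : P → ℝ) {k : ℕ} (β : Form P E k),
    d (fsmul g β) = w1F (d (toF0 g)) β + fsmul g (d β)
  leibniz_one : ∀ (σ : Form P E 1) {k : ℕ} (β : Form P E k),
    d (w1F σ β) = w2F (d σ) β - w1F σ (d β)

/-- The kernel (at `p`) of a form of positive degree. -/
def kerSet {k : ℕ} (ω : Form P E (k + 1)) (p : P) : Set E :=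
  {v | (ω p).curryLeft v = 0}

/-- The rank of a subset of the tangent model: the dimension of its span. -/
def rk (S : Set E) : ℕ := Module.finrank ℝ (Submodule.span ℝ S)

/-- A `j`-form is semibasic (annihilated by `ker ω`) ; every `0`-form is semibasic. -/
def SemibasicPt {m : ℕ} (ω : Form P E (m + 1)) : ∀ {j : ℕ}, Form P E j → Prop
  | 0, _ => True
  | _ + 1, α => ∀ p, ∀ v ∈ kerSet ω p, (α p).curryLeft v = 0

/-- The Reeb "distribution" at a point `p`: tangent vectors in `ker ω` whose contraction with
`dΘ` is annihilated by `ker ω`. -/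
def reebSet (C : DiffCalc P E) {m : ℕ} (Θ ω : Form P E (m + 1)) (p : P) : Set E :=
  {v | v ∈ kerSet ω p ∧ ∀ w ∈ kerSet ω p, (((C.d Θ) p).curryLeft v).curryLeft w = 0}

/-- The characteristic distribution `ker ω ∩ ker Θ ∩ ker dΘ` at a point. -/
def charSet (C : DiffCalc P E) {m : ℕ} (Θ ω : Form P E (m + 1)) (p : P) : Set E :=
  {v | v ∈ kerSet ω p ∧ (Θ p).curryLeft v = 0 ∧ ((C.d Θ) p).curryLeft v = 0}

/-- A Reeb vector field: a section of the Reeb distribution. -/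
def IsReebField (C : DiffCalc P E) {m : ℕ} (Θ ω : Form P E (m + 1)) (R : VF P E) : Prop :=
  ∀ p, R p ∈ reebSet C Θ ω p

/-- Definition of a premulticontact structure `(Θ, ω)` on `P` (degrees `m+1`, i.e. `dim M = m+1`):
`ω` is closed, `ker ω` has constant rank `N`, the Reeb distribution has rank `(m+1)+k`, the
characteristic distribution has rank `k`, and the semibasic `m`-forms are exactly the
contractions `i(R)Θ` with Reeb vector fields `R`.  For `k = 0` this is a multicontact
structure. -/
structure IsPremulticontact (C : DiffCalc P E) (m N k : ℕ) (Θ ω : Form P E (m + 1)) :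
    Prop where
  dim_eq : Module.finrank ℝ E = (m + 1) + N
  k_le : k ≤ N - (m + 1)
  closed : C.d ω = 0
  rank_ker : ∀ p, rk (kerSet ω p) = N
  rank_reeb : ∀ p, rk (reebSet C Θ ω p) = (m + 1) + k
  rank_char : ∀ p, rk (charSet C Θ ω p) = k
  reeb_semibasic :
    {α : Form P E m | SemibasicPt ω α} =
      {α : Form P E m | ∃ R : VF P E, IsReebField C Θ ω R ∧ α = iotaF R Θ}

/-- A Reeb vector field for the pair `(Θ, ω)`, in the sense of sections of the Reeb
distribution: `R ∈ Γ(ker ω)` and `i(R)dΘ` is annihilated by all vector fields in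
`Γ(ker ω)`. -/
def IsReebSection {P E : Type} [AddCommGroup E] [Module ℝ E] (C : DiffCalc P E)
    {m : ℕ} (Θ ω : Form P E (m + 1)) (R : VF P E) : Prop :=
  (∀ p, R p ∈ kerSet ω p) ∧
    ∀ Y : VF P E, (∀ p, Y p ∈ kerSet ω p) → iotaF Y (iotaF R (C.d Θ)) = 0

section Aux

variable {P E : Type} [AddCommGroup E] [Module ℝ E]

lemma iotaF_zero' {k : ℕ} (X : VF P E) : iotaF X (0 : Form P E (k + 1)) = 0 := by
  funext p; ext v; simp [iotaF]

lemma iotaF_add' {k : ℕ} (X : VF P E) (α β : Form P E (k + 1)) :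
    iotaF X (α + β) = iotaF X α + iotaF X β := by
  funext p; ext v; simp [iotaF]

lemma d_zero' (C : DiffCalc P E) {k : ℕ} : C.d (0 : Form P E k) = 0 := by
  have := C.d_smul 0 (0 : Form P E k)
  simpa using this

lemma lieD_zero' (C : DiffCalc P E) (X : VF P E) {k : ℕ} :
    C.lieD X (0 : Form P E k) = 0 := by
  have h := C.lieD_add X (0 : Form P E k) 0
  simp only [add_zero] at h
  exact (left_eq_add.mp h)

/-- If `X` is a section of `ker ω` then `i(X)ω = 0`. -/
lemma iotaF_ker {m : ℕ} (ω : Form P E (m + 1)) (X : VF P E)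
    (hX : ∀ p, X p ∈ kerSet ω p) : iotaF X ω = 0 := by
  funext p; exact hX p

/-- `L_R ω = 0` when `ω` is closed and `R ∈ Γ(ker ω)`. -/
lemma lieD_closed_ker (C : DiffCalc P E) {m : ℕ} (ω : Form P E (m + 1))
    (hclosed : C.d ω = 0) (R : VF P E) (hR : ∀ p, R p ∈ kerSet ω p) :
    C.lieD R ω = 0 := by
  rw [C.cartan R ω, hclosed, iotaF_zero', iotaF_ker ω R hR, d_zero', add_zero]

/-- Involutivity of `ker ω` in the needed form: bracket of sections is a section. -/
lemma bracket_ker (C : DiffCalc P E) {m : ℕ} (ω : Form P E (m + 1))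
    (hclosed : C.d ω = 0) (X Y : VF P E)
    (hX : ∀ p, X p ∈ kerSet ω p) (hY : ∀ p, Y p ∈ kerSet ω p) :
    ∀ p, C.bracket X Y p ∈ kerSet ω p := by
  have h := C.lie_iota X Y ω
  rw [iotaF_ker ω Y hY, lieD_zero', lieD_closed_ker C ω hclosed X hX,
    iotaF_zero', add_zero] at h
  intro p
  have : iotaF (C.bracket X Y) ω = 0 := h.symm
  exact congrFun this p

end Aux

/-- If `ω` is a closed form whose kernel distribution has constant rank,
then the set `𝕽` of Reeb vector fields of the pair `(Θ, ω)` is involutive: the Lie bracket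
of two Reeb vector fields is again a Reeb vector field. -/
theorem reeb_distribution_involutive
    {P E : Type} [AddCommGroup E] [Module ℝ E] (C : DiffCalc P E)
    {m : ℕ} (ω Θ : Form P E (m + 1))
    (hclosed : C.d ω = 0)
    (N : ℕ) (hconstRank : ∀ p : P, rk (kerSet ω p) = N)
    (R₁ R₂ : VF P E)
    (h₁ : IsReebSection C Θ ω R₁) (h₂ : IsReebSection C Θ ω R₂) :
    IsReebSection C Θ ω (C.bracket R₁ R₂) := by
  obtain ⟨hk₁, hr₁⟩ := h₁
  obtain ⟨hk₂, hr₂⟩ := h₂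
  constructor
  · exact bracket_ker C ω hclosed R₁ R₂ hk₁ hk₂
  · intro Y hY
    -- `[R₁,Y]` and `[R₂,Y]` are sections of `ker ω`
    have hb₁ : ∀ p, C.bracket R₁ Y p ∈ kerSet ω p :=
      bracket_ker C ω hclosed R₁ Y hk₁ hY
    have hb₂ : ∀ p, C.bracket R₂ Y p ∈ kerSet ω p :=
      bracket_ker C ω hclosed R₂ Y hk₂ hY
    -- i([R₁,R₂]) dΘ + i(R₂) L_{R₁} dΘ = L_{R₁} i(R₂) dΘ
    have hmain := C.lie_iota R₁ R₂ (C.d Θ)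
    -- Term A : i(Y) (L_{R₁} (i(R₂) dΘ)) = 0
    have hA : iotaF Y (C.lieD R₁ (iotaF R₂ (C.d Θ))) = 0 := by
      have h := C.lie_iota R₁ Y (iotaF R₂ (C.d Θ))
      rw [hr₂ Y hY, lieD_zero'] at h
      have hbr : iotaF (C.bracket R₁ Y) (iotaF R₂ (C.d Θ)) = 0 := hr₂ _ hb₁
      rw [hbr, zero_add] at h
      exact h.symm
    -- L_{R₁} dΘ = d (i(R₁) dΘ)
    have hL : C.lieD R₁ (C.d Θ) = C.d (iotaF R₁ (C.d Θ)) := by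
      rw [C.cartan R₁ (C.d Θ), C.d_d, iotaF_zero', zero_add]
    -- i(R₂) d(i(R₁) dΘ) = L_{R₂} (i(R₁) dΘ)
    have hC : iotaF R₂ (C.d (iotaF R₁ (C.d Θ))) = C.lieD R₂ (iotaF R₁ (C.d Θ)) := by
      have h := C.cartan R₂ (iotaF R₁ (C.d Θ))
      have h0 : iotaF R₂ (iotaF R₁ (C.d Θ)) = 0 := hr₁ R₂ hk₂
      rw [h0, d_zero', add_zero] at h
      exact h.symm
    -- Term B : i(Y) (i(R₂) (L_{R₁} dΘ)) = 0
    have hB : iotaF Y (iotaF R₂ (C.lieD R₁ (C.d Θ))) = 0 := by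
      rw [hL, hC]
      have h := C.lie_iota R₂ Y (iotaF R₁ (C.d Θ))
      rw [hr₁ Y hY, lieD_zero'] at h
      have hbr : iotaF (C.bracket R₂ Y) (iotaF R₁ (C.d Θ)) = 0 := hr₁ _ hb₂
      rw [hbr, zero_add] at h
      exact h.symm
    -- combine
    have := congrArg (iotaF Y) hmain
    rw [iotaF_add', hB, hA] at this
    simpa using this.symm
end
end

section
/- Let $(P, \Theta, \omega)$ be a premulticontact manifold. Then the characteristic distribution $\mathcal{C} = \ker\omega \cap \ker\Theta \cap \ker\mathrm{d}\Theta$ is involutive: for any vector fields $X, Z$ with values in $\mathcal{C}$, the bracket $[X, Z]$ also takes values in $\mathcal{C}$. -/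
open scoped BigOperators

noncomputable section

variable {P E : Type} [AddCommGroup E] [Module ℝ E]

lemma iotaF_zeroF {P E : Type} [AddCommGroup E] [Module ℝ E] {k : ℕ} (X : VF P E) :
    iotaF X (0 : Form P E (k + 1)) = 0 := by
  funext p
  show ((0 : Form P E (k + 1)) p).curryLeft (X p) = 0
  simp

lemma d_zeroF {P E : Type} [AddCommGroup E] [Module ℝ E] (C : DiffCalc P E) {k : ℕ} :
    C.d (0 : Form P E k) = 0 := by
  have h := C.d_smul 0 (0 : Form P E k)
  simpa using h

lemma lieD_zeroF {P E : Type} [AddCommGroup E] [Module ℝ E] (C : DiffCalc P E)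
    (X : VF P E) {k : ℕ} : C.lieD X (0 : Form P E k) = 0 := by
  have h := C.lieD_add X (0 : Form P E k) 0
  rw [add_zero] at h
  exact (add_eq_left.mp h.symm)

lemma key_bracket {P E : Type} [AddCommGroup E] [Module ℝ E] (C : DiffCalc P E) {k : ℕ}
    (X Z : VF P E) (α : Form P E (k + 1))
    (hXα : iotaF X α = 0) (hZα : iotaF Z α = 0) (hXdα : iotaF X (C.d α) = 0) :
    iotaF (C.bracket X Z) α = 0 := by
  have h1 := C.lie_iota X Z α
  have h2 : C.lieD X α = 0 := by
    rw [C.cartan, hXα, hXdα, d_zeroF, add_zero]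
  rw [hZα, h2, iotaF_zeroF, lieD_zeroF, add_zero] at h1
  exact h1.symm

/-- On a premulticontact manifold `(P, Θ, ω)`, the characteristic
distribution `𝒞 = ker ω ∩ ker Θ ∩ ker dΘ` is involutive: the Lie bracket of two vector
fields with values in `𝒞` again takes values in `𝒞`. -/
theorem characteristic_distribution_involutive
    {P E : Type} [AddCommGroup E] [Module ℝ E] (C : DiffCalc P E)
    {m N k : ℕ} (Θ ω : Form P E (m + 1))
    (hpmc : IsPremulticontact C m N k Θ ω)
    (X Z : VF P E)
    (hX : ∀ p, X p ∈ charSet C Θ ω p) (hZ : ∀ p, Z p ∈ charSet C Θ ω p) :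
    ∀ p, C.bracket X Z p ∈ charSet C Θ ω p := by
  have hXω : iotaF X ω = 0 := funext fun p => (hX p).1
  have hZω : iotaF Z ω = 0 := funext fun p => (hZ p).1
  have hXΘ : iotaF X Θ = 0 := funext fun p => (hX p).2.1
  have hZΘ : iotaF Z Θ = 0 := funext fun p => (hZ p).2.1
  have hXdΘ : iotaF X (C.d Θ) = 0 := funext fun p => (hX p).2.2
  have hZdΘ : iotaF Z (C.d Θ) = 0 := funext fun p => (hZ p).2.2
  have h1 : iotaF (C.bracket X Z) ω = 0 :=
    key_bracket C X Z ω hXω hZω (by rw [hpmc.closed, iotaF_zeroF])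
  have h2 : iotaF (C.bracket X Z) Θ = 0 := key_bracket C X Z Θ hXΘ hZΘ hXdΘ
  have h3 : iotaF (C.bracket X Z) (C.d Θ) = 0 :=
    key_bracket C X Z (C.d Θ) hXdΘ hZdΘ (by rw [C.d_d, iotaF_zeroF])
  intro p
  exact ⟨congrFun h1 p, congrFun h2 p, congrFun h3 p⟩
end
end

section
/- Let $(P, \Theta, \omega)$ be a premulticontact manifold. Then the characteristic distribution equals the intersection of the Reeb distribution with $\ker\Theta$: $\ker\omega \cap \ker\Theta \cap \ker\mathrm{d}\Theta = \mathcal{D}^{\mathfrak{R}} \cap \ker\Theta$. -/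
open scoped BigOperators

noncomputable section

variable {P E : Type} [AddCommGroup E] [Module ℝ E]

/-!
The characteristic distribution lies in `𝒟^𝕽 ∩ ker Θ`, so it suffices to bound the dimension of
the latter by `k`. At a point `p`, `𝒟^𝕽_p ∩ ker Θ_p` is the kernel of `v ↦ i(v)Θ_p` on `𝒟^𝕽_p`.
Any `m`-covector on the `(m+1)`-dimensional quotient `T_pP / ker ω_p`, pulled back and extended
by zero away from `p`, is a semibasic `m`-form, hence of the form `i(R)Θ` for a Reeb field `R`.
So the image of `v ↦ i(v)Θ_p` has dimension at least `binom(m+1, m) = m+1`, and rank–nullity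
gives `dim (𝒟^𝕽_p ∩ ker Θ_p) ≤ (m+1+k) - (m+1) = k`.
-/

open Module

theorem finrank_alternatingMap_eq_choose {K V : Type*} [Field K] [AddCommGroup V] [Module K V]
    [FiniteDimensional K V] (n : ℕ) :
    finrank K (V [⋀^Fin n]→ₗ[K] K) = (finrank K V).choose n := by
  rw [exteriorPower.alternatingMapLinearEquiv.finrank_eq, ← exteriorPower.finrank_eq]
  exact Subspace.dual_finrank_eq

def AlternatingMap.compLinearMapₗ {R M M₂ N ι : Type*} [CommSemiring R] [AddCommMonoid M]
    [Module R M] [AddCommMonoid M₂] [Module R M₂] [AddCommMonoid N] [Module R N]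
    (f : M₂ →ₗ[R] M) : (M [⋀^ι]→ₗ[R] N) →ₗ[R] (M₂ [⋀^ι]→ₗ[R] N) where
  toFun g := g.compLinearMap f
  map_add' _ _ := rfl
  map_smul' _ _ := rfl

theorem Submodule.finrank_map_add_finrank_inf_ker {K V W : Type*} [Field K] [AddCommGroup V]
    [Module K V] [AddCommGroup W] [Module K W] (f : V →ₗ[K] W) (p : Submodule K V)
    [FiniteDimensional K p] :
    finrank K (p.map f) + finrank K ↥(p ⊓ LinearMap.ker f) = finrank K p := by
  have hker : LinearMap.ker (f.domRestrict p) = (p ⊓ LinearMap.ker f).comap p.subtype := by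
    rw [LinearMap.ker_domRestrict, Submodule.comap_inf, Submodule.comap_subtype_self, top_inf_eq]
  rw [← LinearMap.finrank_range_add_finrank_ker (f.domRestrict p), LinearMap.range_domRestrict,
    hker, (Submodule.comapSubtypeEquivOfLe inf_le_left).finrank_eq]

theorem rk_coe (S : Submodule ℝ E) :
    rk (S : Set E) = finrank ℝ S := by
  rw [rk, Submodule.span_eq]

section Premulticontact

variable {m : ℕ}

def kerSubmodule (ω : Form P E (m + 1)) (p : P) : Submodule ℝ E :=
  LinearMap.ker (ω p).curryLeft

theorem coe_kerSubmodule (ω : Form P E (m + 1)) (p : P) :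
    (kerSubmodule ω p : Set E) = kerSet ω p :=
  rfl

def reebSubmodule (C : DiffCalc P E) (Θ ω : Form P E (m + 1)) (p : P) : Submodule ℝ E where
  carrier := reebSet C Θ ω p
  zero_mem' := ⟨map_zero _, fun w _ => by simp⟩
  add_mem' := fun {u v} hu hv =>
    ⟨(kerSubmodule ω p).add_mem hu.1 hv.1, fun w hw => by simp [hu.2 w hw, hv.2 w hw]⟩
  smul_mem' := fun c v hv =>
    ⟨(kerSubmodule ω p).smul_mem c hv.1, fun w hw => by simp [hv.2 w hw]⟩

theorem coe_reebSubmodule (C : DiffCalc P E) (Θ ω : Form P E (m + 1)) (p : P) :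
    (reebSubmodule C Θ ω p : Set E) = reebSet C Θ ω p :=
  rfl

def charSubmodule (C : DiffCalc P E) (Θ ω : Form P E (m + 1)) (p : P) : Submodule ℝ E :=
  kerSubmodule ω p ⊓ LinearMap.ker (Θ p).curryLeft ⊓ LinearMap.ker (C.d Θ p).curryLeft

theorem coe_charSubmodule (C : DiffCalc P E) (Θ ω : Form P E (m + 1)) (p : P) :
    (charSubmodule C Θ ω p : Set E) = charSet C Θ ω p :=
  Set.ext fun _ => and_assoc

theorem charSubmodule_le_reebSubmodule_inf_ker (C : DiffCalc P E) (Θ ω : Form P E (m + 1))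
    (p : P) :
    charSubmodule C Θ ω p ≤ reebSubmodule C Θ ω p ⊓ LinearMap.ker (Θ p).curryLeft :=
  fun _ ⟨⟨hω, hΘ⟩, hdΘ⟩ => ⟨⟨hω, fun w _ => by simp [LinearMap.mem_ker.mp hdΘ]⟩, hΘ⟩

theorem semibasicPt_single [DecidableEq P] :
    ∀ {m : ℕ} (ω : Form P E (m + 1)) (p : P)
      (γ : AlternatingMap ℝ (E ⧸ kerSubmodule ω p) ℝ (Fin m)),
      SemibasicPt ω (Pi.single p (γ.compLinearMap (kerSubmodule ω p).mkQ))
  | 0, _, _, _ => trivial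
  | _ + 1, ω, p, γ => by
    intro q v hv
    rcases eq_or_ne q p with rfl | hq
    · have hv0 : (kerSubmodule ω q).mkQ v = 0 := (Submodule.Quotient.mk_eq_zero _).mpr hv
      rw [Pi.single_eq_same, AlternatingMap.curryLeft_compLinearMap, hv0, map_zero,
        AlternatingMap.zero_compLinearMap]
    · rw [Pi.single_eq_of_ne hq, AlternatingMap.curryLeft_zero, LinearMap.zero_apply]

variable {C : DiffCalc P E} {N k : ℕ} {Θ ω : Form P E (m + 1)}

theorem IsPremulticontact.finiteDimensional (hpmc : IsPremulticontact C m N k Θ ω) :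
    FiniteDimensional ℝ E :=
  Module.finite_of_finrank_pos (by rw [hpmc.dim_eq]; omega)

theorem IsPremulticontact.finrank_quotient_kerSubmodule
    (hpmc : IsPremulticontact C m N k Θ ω) (p : P) :
    finrank ℝ (E ⧸ kerSubmodule ω p) = m + 1 := by
  have := hpmc.finiteDimensional
  have hker := hpmc.rank_ker p
  rw [← coe_kerSubmodule, rk_coe] at hker
  have hsum := Submodule.finrank_quotient_add_finrank (kerSubmodule ω p)
  have hdim := hpmc.dim_eq
  omega

theorem IsPremulticontact.range_compLinearMapₗ_mkQ_le
    (hpmc : IsPremulticontact C m N k Θ ω) (p : P) :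
    LinearMap.range (AlternatingMap.compLinearMapₗ (N := ℝ) (ι := Fin m)
        (kerSubmodule ω p).mkQ) ≤
      (reebSubmodule C Θ ω p).map (Θ p).curryLeft := by
  classical
  rintro _ ⟨γ, rfl⟩
  have hsemi : Pi.single p (γ.compLinearMap (kerSubmodule ω p).mkQ) ∈
      {α : Form P E m | SemibasicPt ω α} := semibasicPt_single ω p γ
  rw [hpmc.reeb_semibasic] at hsemi
  obtain ⟨R, hR, hRΘ⟩ := hsemi
  have hRΘp := congrFun hRΘ p
  rw [Pi.single_eq_same] at hRΘp
  exact ⟨R p, hR p, hRΘp.symm⟩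

theorem IsPremulticontact.finrank_reebSubmodule_inf_ker_le
    (hpmc : IsPremulticontact C m N k Θ ω) (p : P) :
    finrank ℝ ↥(reebSubmodule C Θ ω p ⊓ LinearMap.ker (Θ p).curryLeft) ≤ k := by
  have := hpmc.finiteDimensional
  have hreeb := hpmc.rank_reeb p
  rw [← coe_reebSubmodule, rk_coe] at hreeb
  have himage : m + 1 ≤ finrank ℝ ↥((reebSubmodule C Θ ω p).map (Θ p).curryLeft) :=
    calc m + 1 = finrank ℝ (AlternatingMap ℝ (E ⧸ kerSubmodule ω p) ℝ (Fin m)) := by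
          rw [finrank_alternatingMap_eq_choose, hpmc.finrank_quotient_kerSubmodule,
            Nat.choose_succ_self_right]
      _ = finrank ℝ (LinearMap.range (AlternatingMap.compLinearMapₗ (N := ℝ) (ι := Fin m)
            (kerSubmodule ω p).mkQ)) :=
          (LinearMap.finrank_range_of_inj
            (AlternatingMap.compLinearMap_injective _ (Submodule.mkQ_surjective _))).symm
      _ ≤ _ := Submodule.finrank_mono (hpmc.range_compLinearMapₗ_mkQ_le p)
  have hrankNullity :=
    Submodule.finrank_map_add_finrank_inf_ker (Θ p).curryLeft (reebSubmodule C Θ ω p)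
  omega

end Premulticontact

/-- On a premulticontact manifold `(P, Θ, ω)`, the characteristic
distribution equals the intersection of the Reeb distribution with `ker Θ`:
`ker ω ∩ ker Θ ∩ ker dΘ = 𝒟^𝕽 ∩ ker Θ`. -/
theorem characteristic_eq_reeb_inter_kerTheta
    {P E : Type} [AddCommGroup E] [Module ℝ E] (C : DiffCalc P E)
    {m N k : ℕ} (Θ ω : Form P E (m + 1))
    (hpmc : IsPremulticontact C m N k Θ ω) :
    ∀ p : P, charSet C Θ ω p = reebSet C Θ ω p ∩ {v | (Θ p).curryLeft v = 0} := by
  intro p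
  have := hpmc.finiteDimensional
  have hchar := hpmc.rank_char p
  rw [← coe_charSubmodule, rk_coe] at hchar
  have heq : charSubmodule C Θ ω p = reebSubmodule C Θ ω p ⊓ LinearMap.ker (Θ p).curryLeft :=
    Submodule.eq_of_le_of_finrank_le (charSubmodule_le_reebSubmodule_inf_ker C Θ ω p)
      (hchar ▸ hpmc.finrank_reebSubmodule_inf_ker_le p)
  rw [← coe_charSubmodule, heq]
  rfl
end
end
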